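/- (Sz.-Nagy) Let T be a bounded invertible operator on a Hilbert space (H, h₀) that is uniformly bounded: ‖Tᵏ‖ ≤ c for all integers k (positive and negative). Then there exists a bounded self-adjoint operator Q with (1/c)·I ≤ Q ≤ c·I such that QTQ⁻¹ is unitary; equivalently, T is unitary with respect to the inner product h_T(x,y) := h₀(Qx, Qy). -/

import Mathlib

/-!
Average the inner product along the orbit of `T`: `⟪x, y⟫_N = 𝔼_{n<N} ⟪Tⁿx, Tⁿy⟫` is a
sesquilinear form with `c⁻²‖x‖² ≤ ⟪x, x⟫_N ≤ c²‖x‖²`, and telescoping gives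
`⟪Tx, Ty⟫_N - ⟪x, y⟫_N = O(1/N)`. A limit along a free ultrafilter (a Banach limit) is then a
`T`-invariant form with the same bounds. It is represented by an operator `S` with
`c⁻² ≤ S ≤ c²`, and `Q = √S` works because `⟪Qx, Qy⟫ = ⟪Sx, y⟫` and the square root is operator
monotone.
-/
open Filter Finset ContinuousLinearMap
open scoped Topology ComplexConjugate InnerProductSpace BigOperators

section UltrafilterLimit

variable {ι 𝕜 E F : Type*} [RCLike 𝕜] [SeminormedAddCommGroup E] [NormedSpace 𝕜 E]
  [SeminormedAddCommGroup F] [NormedSpace 𝕜 F]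

theorem Ultrafilter.exists_tendsto_of_eventually_norm_le (φ : Ultrafilter ι) {u : ι → 𝕜} {C : ℝ}
    (hu : ∀ᶠ i in φ, ‖u i‖ ≤ C) : ∃ z, Tendsto u φ (𝓝 z) := by
  obtain ⟨z, -, hz⟩ := (isCompact_closedBall (0 : 𝕜) C).ultrafilter_le_nhds (φ.map u) <| by
    rw [Ultrafilter.coe_map, le_principal_iff]
    exact hu.mono fun i ↦ mem_closedBall_zero_iff.2
  exact ⟨z, hz⟩

theorem Ultrafilter.exists_tendsto_sesqForm (φ : Ultrafilter ι)
    (B : ι → E →L⋆[𝕜] F →L[𝕜] 𝕜) {C : ℝ}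
    (hB : ∀ᶠ i in φ, ∀ x y, ‖B i x y‖ ≤ C * ‖x‖ * ‖y‖) :
    ∃ L : E →L⋆[𝕜] F →L[𝕜] 𝕜, ∀ x y, Tendsto (fun i ↦ B i x y) φ (𝓝 (L x y)) := by
  choose f hf using fun x y ↦ φ.exists_tendsto_of_eventually_norm_le (hB.mono fun i h ↦ h x y)
  have eq_of_tendsto {x y z} (h : Tendsto (fun i ↦ B i x y) φ (𝓝 z)) : f x y = z :=
    tendsto_nhds_unique (hf x y) h
  let L₀ : E →ₗ⋆[𝕜] F →ₗ[𝕜] 𝕜 := LinearMap.mk₂'ₛₗ _ _ f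
    (fun x x' y ↦ eq_of_tendsto <| by simpa using (hf x y).add (hf x' y))
    (fun r x y ↦ eq_of_tendsto <| by simpa using (hf x y).const_mul (conj r))
    (fun x y y' ↦ eq_of_tendsto <| by simpa using (hf x y).add (hf x y'))
    (fun r x y ↦ eq_of_tendsto <| by simpa using (hf x y).const_mul r)
  refine ⟨L₀.mkContinuous₂ C fun x y ↦ le_of_tendsto (hf x y).norm ?_, hf⟩
  exact hB.mono fun i h ↦ h x y

end UltrafilterLimit

section CesaroInner

variable {𝕜 H : Type*} [RCLike 𝕜] [NormedAddCommGroup H] [InnerProductSpace 𝕜 H]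

noncomputable def cesaroInnerForm (T : H →L[𝕜] H) (N : ℕ) : H →L⋆[𝕜] H →L[𝕜] 𝕜 :=
  (N : 𝕜)⁻¹ • ∑ n ∈ range N, (innerSL 𝕜).bilinearComp (T ^ n) (T ^ n)

variable (T : H →L[𝕜] H) (N : ℕ) (x y : H)

theorem cesaroInnerForm_apply :
    cesaroInnerForm T N x y = 𝔼 n ∈ range N, ⟪(T ^ n) x, (T ^ n) y⟫_𝕜 := by
  simp [cesaroInnerForm, expect_eq_sum_div_card, div_eq_inv_mul]

theorem conj_cesaroInnerForm : conj (cesaroInnerForm T N x y) = cesaroInnerForm T N y x := by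
  simp [cesaroInnerForm_apply, map_expect]

theorem cesaroInnerForm_self :
    cesaroInnerForm T N x x = ((𝔼 n ∈ range N, ‖(T ^ n) x‖ ^ 2 : ℝ) : 𝕜) := by
  simp [cesaroInnerForm_apply, inner_self_eq_norm_sq_to_K]

theorem cesaroInnerForm_apply_apply_sub :
    cesaroInnerForm T N (T x) (T y) - cesaroInnerForm T N x y =
      (N : 𝕜)⁻¹ * (⟪(T ^ N) x, (T ^ N) y⟫_𝕜 - ⟪x, y⟫_𝕜) := by
  have hshift (n : ℕ) :
      ⟪(T ^ n) (T x), (T ^ n) (T y)⟫_𝕜 = ⟪(T ^ (n + 1)) x, (T ^ (n + 1)) y⟫_𝕜 := by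
    rw [pow_succ, mul_apply_eq_comp, mul_apply_eq_comp]
  simp only [cesaroInnerForm_apply, hshift, expect_eq_sum_div_card, card_range, ← sub_div,
    ← sum_sub_distrib, sum_range_sub fun n ↦ ⟪(T ^ n) x, (T ^ n) y⟫_𝕜]
  simp [div_eq_inv_mul]

variable {T} {c : ℝ}

theorem norm_inner_pow_apply_le (hT : ∀ n, ‖T ^ n‖ ≤ c) (n : ℕ) :
    ‖⟪(T ^ n) x, (T ^ n) y⟫_𝕜‖ ≤ c ^ 2 * ‖x‖ * ‖y‖ := by
  have hc : 0 ≤ c := (norm_nonneg _).trans (hT 0)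
  calc ‖⟪(T ^ n) x, (T ^ n) y⟫_𝕜‖ ≤ ‖(T ^ n) x‖ * ‖(T ^ n) y‖ := norm_inner_le_norm _ _
    _ ≤ (c * ‖x‖) * (c * ‖y‖) := by gcongr <;> exact le_of_opNorm_le _ (hT n) _
    _ = c ^ 2 * ‖x‖ * ‖y‖ := by ring

theorem norm_cesaroInnerForm_le (hT : ∀ n, ‖T ^ n‖ ≤ c) (hN : N ≠ 0) :
    ‖cesaroInnerForm T N x y‖ ≤ c ^ 2 * ‖x‖ * ‖y‖ := by
  rw [cesaroInnerForm_apply]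
  exact (RCLike.norm_expect_le (K := 𝕜)).trans
    (expect_le (nonempty_range_iff.2 hN) fun n _ ↦ norm_inner_pow_apply_le x y hT n)

theorem re_cesaroInnerForm_self_le (hT : ∀ n, ‖T ^ n‖ ≤ c) (hN : N ≠ 0) :
    RCLike.re (cesaroInnerForm T N x x) ≤ c ^ 2 * ‖x‖ ^ 2 := by
  rw [cesaroInnerForm_self, RCLike.ofReal_re, ← mul_pow]
  exact expect_le (nonempty_range_iff.2 hN) fun n _ ↦
    pow_le_pow_left₀ (norm_nonneg _) (le_of_opNorm_le _ (hT n) x) 2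

theorem le_re_cesaroInnerForm_self (hT : ∀ n x, ‖x‖ ≤ c * ‖(T ^ n) x‖) (hN : N ≠ 0) :
    ‖x‖ ^ 2 ≤ c ^ 2 * RCLike.re (cesaroInnerForm T N x x) := by
  rw [cesaroInnerForm_self, RCLike.ofReal_re, mul_expect]
  exact le_expect (nonempty_range_iff.2 hN) fun n _ ↦
    (pow_le_pow_left₀ (norm_nonneg _) (hT n x) 2).trans_eq (mul_pow ..)

theorem tendsto_cesaroInnerForm_apply_apply_sub (hT : ∀ n, ‖T ^ n‖ ≤ c) :
    Tendsto (fun N ↦ cesaroInnerForm T N (T x) (T y) - cesaroInnerForm T N x y) atTop (𝓝 0) := by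
  simp only [cesaroInnerForm_apply_apply_sub]
  refine tendsto_inv_atTop_nhds_zero_nat.zero_mul_isBoundedUnder_le
    (isBoundedUnder_of ⟨c ^ 2 * ‖x‖ * ‖y‖ + ‖⟪x, y⟫_𝕜‖, fun N ↦ ?_⟩)
  exact (norm_sub_le _ _).trans (by grw [norm_inner_pow_apply_le x y hT N])

end CesaroInner

section InvariantForm

variable {𝕜 H : Type*} [RCLike 𝕜] [NormedAddCommGroup H] [InnerProductSpace 𝕜 H]

theorem exists_invariant_sesqForm {T : H →L[𝕜] H} {c : ℝ} (hup : ∀ n, ‖T ^ n‖ ≤ c)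
    (hlow : ∀ n x, ‖x‖ ≤ c * ‖(T ^ n) x‖) :
    ∃ L : H →L⋆[𝕜] H →L[𝕜] 𝕜, (∀ x y, conj (L x y) = L y x) ∧
      (∀ x, ‖x‖ ^ 2 ≤ c ^ 2 * RCLike.re (L x x)) ∧
      (∀ x, RCLike.re (L x x) ≤ c ^ 2 * ‖x‖ ^ 2) ∧
      ∀ x y, L (T x) (T y) = L x y := by
  have hφ : (hyperfilter ℕ : Filter ℕ) ≤ atTop := Nat.cofinite_eq_atTop ▸ hyperfilter_le_cofinite
  have hN : ∀ᶠ N in hyperfilter ℕ, N ≠ 0 := hφ (eventually_ne_atTop 0)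
  obtain ⟨L, hL⟩ := (hyperfilter ℕ).exists_tendsto_sesqForm (cesaroInnerForm T)
    (hN.mono fun N hN x y ↦ norm_cesaroInnerForm_le N x y hup hN)
  have hL_re (x : H) := (RCLike.continuous_re.tendsto _).comp (hL x x)
  refine ⟨L, fun x y ↦ ?_, fun x ↦ ?_, fun x ↦ ?_, fun x y ↦ ?_⟩
  · refine tendsto_nhds_unique ((RCLike.continuous_conj.tendsto _).comp (hL x y)) ?_
    simpa only [Function.comp_def, conj_cesaroInnerForm] using hL y x
  · exact ge_of_tendsto ((hL_re x).const_mul _)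
      (hN.mono fun N hN ↦ le_re_cesaroInnerForm_self N x hlow hN)
  · exact le_of_tendsto (hL_re x) (hN.mono fun N hN ↦ re_cesaroInnerForm_self_le N x hup hN)
  · exact sub_eq_zero.1 <| tendsto_nhds_unique ((hL _ _).sub (hL x y))
      ((tendsto_cesaroInnerForm_apply_apply_sub x y hup).mono_left hφ)

end InvariantForm

namespace CFC

variable {A : Type*} [CStarAlgebra A] [PartialOrder A] [StarOrderedRing A] {a : A} {r : ℝ}

theorem sqrt_algebraMap_sq (hr : 0 ≤ r) : sqrt (algebraMap ℝ A (r ^ 2)) = algebraMap ℝ A r := by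
  rw [map_pow, sqrt_sq _ (algebraMap_nonneg A hr)]

theorem algebraMap_le_sqrt (hr : 0 ≤ r) (h : algebraMap ℝ A (r ^ 2) ≤ a) :
    algebraMap ℝ A r ≤ sqrt a := by
  simpa only [sqrt_algebraMap_sq hr] using sqrt_le_sqrt _ _ h

theorem sqrt_le_algebraMap (hr : 0 ≤ r) (h : a ≤ algebraMap ℝ A (r ^ 2)) :
    sqrt a ≤ algebraMap ℝ A r := by
  simpa only [sqrt_algebraMap_sq hr] using sqrt_le_sqrt _ _ h

end CFC

namespace ContinuousLinearMap

variable {H : Type*} [NormedAddCommGroup H] [InnerProductSpace ℂ H]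

theorem re_inner_real_smul_self (r : ℝ) (x : H) : (⟪r • x, x⟫_ℂ).re = r * ‖x‖ ^ 2 := by
  rw [← Complex.coe_smul, inner_smul_left, Complex.conj_ofReal, Complex.re_ofReal_mul]
  exact congrArg (r * ·) (inner_self_eq_norm_sq (𝕜 := ℂ) x)

variable [CompleteSpace H] {S : H →L[ℂ] H}

theorem algebraMap_le_iff (hS : IsSelfAdjoint S) (r : ℝ) :
    algebraMap ℝ _ r ≤ S ↔ ∀ x, r * ‖x‖ ^ 2 ≤ (⟪S x, x⟫_ℂ).re := by
  simp [le_def, isPositive_def', hS.sub (.algebraMap _ (.all r)), reApplyInnerSelf,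
    inner_sub_left, re_inner_real_smul_self]

theorem le_algebraMap_iff (hS : IsSelfAdjoint S) (r : ℝ) :
    S ≤ algebraMap ℝ _ r ↔ ∀ x, (⟪S x, x⟫_ℂ).re ≤ r * ‖x‖ ^ 2 := by
  simp [le_def, isPositive_def', (IsSelfAdjoint.algebraMap _ (.all r)).sub hS, reApplyInnerSelf,
    inner_sub_left, re_inner_real_smul_self]

theorem exists_invariant_between_algebraMap {T : H →L[ℂ] H} {c : ℝ} (hc : 0 < c)
    (hup : ∀ n, ‖T ^ n‖ ≤ c) (hlow : ∀ n x, ‖x‖ ≤ c * ‖(T ^ n) x‖) :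
    ∃ S : H →L[ℂ] H, algebraMap ℝ _ (c⁻¹ ^ 2) ≤ S ∧ S ≤ algebraMap ℝ _ (c ^ 2) ∧
      ∀ x y, ⟪S (T x), T y⟫_ℂ = ⟪S x, y⟫_ℂ := by
  obtain ⟨L, hL_conj, hL_low, hL_up, hL_inv⟩ := exists_invariant_sesqForm hup hlow
  set S := InnerProductSpace.continuousLinearMapOfBilin L
  have hS (x y : H) : ⟪S x, y⟫_ℂ = L x y := InnerProductSpace.continuousLinearMapOfBilin_apply L x y
  have hS_sa : IsSelfAdjoint S := isSelfAdjoint_iff_isSymmetric.2 fun x y ↦ by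
    rw [coe_coe, hS, ← inner_conj_symm, hS, hL_conj]
  refine ⟨S, (algebraMap_le_iff hS_sa _).2 fun x ↦ ?_, (le_algebraMap_iff hS_sa _).2 fun x ↦ ?_,
    fun x y ↦ by rw [hS, hS, hL_inv]⟩
  · rw [hS, inv_pow, inv_mul_le_iff₀ (by positivity)]
    exact hL_low x
  · rw [hS]
    exact hL_up x

end ContinuousLinearMap

namespace Units

variable {𝕜 E : Type*} [NontriviallyNormedField 𝕜] [SeminormedAddCommGroup E] [NormedSpace 𝕜 E]
  {u : (E →L[𝕜] E)ˣ} {c : ℝ}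

theorem norm_val_pow_le_of_norm_zpow_le (h : ∀ k : ℤ, ‖((u ^ k : (E →L[𝕜] E)ˣ) : E →L[𝕜] E)‖ ≤ c)
    (n : ℕ) : ‖(u : E →L[𝕜] E) ^ n‖ ≤ c := by
  simpa using h n

theorem norm_le_mul_norm_pow_apply_of_norm_zpow_le
    (h : ∀ k : ℤ, ‖((u ^ k : (E →L[𝕜] E)ˣ) : E →L[𝕜] E)‖ ≤ c) (n : ℕ) (x : E) :
    ‖x‖ ≤ c * ‖((u : E →L[𝕜] E) ^ n) x‖ := by
  have hx : ((u ^ (-n : ℤ) : (E →L[𝕜] E)ˣ) : E →L[𝕜] E) (((u : E →L[𝕜] E) ^ n) x) = x := by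
    rw [← mul_apply_eq_comp, ← val_pow_eq_pow_val, ← zpow_natCast, ← val_mul, ← zpow_add,
      neg_add_cancel, zpow_zero, val_one, one_apply_eq_self]
  simpa only [hx] using le_of_opNorm_le _ (h (-n)) (((u : E →L[𝕜] E) ^ n) x)

end Units

/-- (Sz.-Nagy) Let `T` be a bounded invertible operator on a complex Hilbert space
`(H, h₀)` which is uniformly bounded: `‖Tᵏ‖ ≤ c` for all integers `k`. Then there
is a bounded self-adjoint operator `Q` with `(1/c)·I ≤ Q ≤ c·I` such that `T` is
unitary with respect to the inner product `h_T(x,y) := h₀(Qx, Qy)`, i.e.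
`h₀(Q(Tx), Q(Ty)) = h₀(Qx, Qy)` (equivalently `Q T Q⁻¹` is `h₀`-unitary). -/
theorem stmt12 (H : Type*) [NormedAddCommGroup H] [InnerProductSpace ℂ H]
    [CompleteSpace H]
    (T : (H →L[ℂ] H)ˣ) (c : ℝ) (hc : 1 ≤ c)
    (hbound : ∀ k : ℤ, ‖((T ^ k : (H →L[ℂ] H)ˣ) : H →L[ℂ] H)‖ ≤ c) :
    ∃ Q : H →L[ℂ] H, IsSelfAdjoint Q ∧
      (∀ x : H, (1 / c) * ‖x‖ ^ 2 ≤ (inner ℂ (Q x) x : ℂ).re ∧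
        (inner ℂ (Q x) x : ℂ).re ≤ c * ‖x‖ ^ 2) ∧
      (∀ x y : H,
        (inner ℂ (Q ((T : H →L[ℂ] H) x)) (Q ((T : H →L[ℂ] H) y)) : ℂ) =
          inner ℂ (Q x) (Q y)) := by
  have hc₀ : 0 < c := one_pos.trans_le hc
  obtain ⟨S, hS_low, hS_up, hS_inv⟩ := exists_invariant_between_algebraMap hc₀
    (Units.norm_val_pow_le_of_norm_zpow_le hbound)
    (Units.norm_le_mul_norm_pow_apply_of_norm_zpow_le hbound)
  have hS : 0 ≤ S := (algebraMap_nonneg _ (by positivity)).trans hS_low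
  have hQ : IsSelfAdjoint (CFC.sqrt S) := (CFC.sqrt_nonneg S).isSelfAdjoint
  have hQQ (x y : H) : ⟪CFC.sqrt S x, CFC.sqrt S y⟫_ℂ = ⟪S x, y⟫_ℂ :=
    calc ⟪CFC.sqrt S x, CFC.sqrt S y⟫_ℂ = ⟪CFC.sqrt S (CFC.sqrt S x), y⟫_ℂ :=
          (hQ.isSymmetric _ _).symm
      _ = ⟪S x, y⟫_ℂ := by rw [← mul_apply_eq_comp, CFC.sqrt_mul_sqrt_self S hS]
  refine ⟨CFC.sqrt S, hQ, fun x ↦ ⟨?_, ?_⟩, fun x y ↦ by rw [hQQ, hQQ, hS_inv]⟩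
  · rw [one_div]
    exact (algebraMap_le_iff hQ _).1 (CFC.algebraMap_le_sqrt (by positivity) hS_low) x
  · exact (le_algebraMap_iff hQ _).1 (CFC.sqrt_le_algebraMap hc₀.le hS_up) x
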